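/- arXiv:2306.12395 — 5 statements merged into one kernel-verified Lean document; each statement's English description precedes it below -/
import Mathlib

section
/- For each n ≥ 2, the operator W_n/√n on H² is a pure isometry (a unilateral shift) of infinite multiplicity; equivalently, ⋂_{k≥0} (W_n)^k(H²) = {0} and the wandering subspace H² ⊖ W_n(H²) is infinite-dimensional. -/
/-!
Comparing Taylor coefficients on the disk shows that `W_n f` has coefficient sequence
`k ↦ f ⌊k / n⌋`: every coefficient of `f` is repeated `n` times, whence `‖W_n f‖² = n ‖f‖²`.
The coefficients of `W_nⁱ f` are constant on `[0, nⁱ)`, so a vector in every range `W_nⁱ(H²)` has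
constant, hence zero, square-summable coefficients. The vectors `e_{nm} - e_{nm+1}` are orthogonal
to each other and to the range of `W_n`, whose coefficients agree at `nm` and `nm + 1`; so the
wandering subspace is infinite-dimensional.
-/

open Filter Topology
open scoped ComplexInnerProductSpace

/-- The Hardy space `H²(𝔻)`, modeled as the space of square-summable Taylor
coefficient sequences. -/
noncomputable abbrev H2 : Type := lp (fun _ : ℕ => ℂ) 2

/-- Evaluation of an element of `H²` at a point of the unit disk, via its power series. -/
noncomputable def eval (f : H2) (z : ℂ) : ℂ := ∑' n : ℕ, (f n) * z ^ n

open Finset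

theorem hasSum_comp_div_mod {α : Type*} [AddCommMonoid α] [TopologicalSpace α] [ContinuousAdd α]
    {n : ℕ} (hn : 0 < n) {G : ℕ → ℕ → α} {a : ℕ → α}
    (hG : ∀ j < n, HasSum (fun m => G m j) (a j)) :
    HasSum (fun k => G (k / n) (k % n)) (∑ j ∈ range n, a j) := by
  have hresidue : ∀ j ∈ range n,
      HasSum (fun k => if k % n = j then G (k / n) j else 0) (a j) := by
    intro j hj
    have hjn : j < n := mem_range.1 hj
    have hinj : Function.Injective (fun m => n * m + j) := fun m m' h =>
      Nat.eq_of_mul_eq_mul_left hn (Nat.add_right_cancel h)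
    rw [← hinj.hasSum_iff]
    · convert hG j hjn using 1
      ext m
      simp [Nat.mul_add_div hn, Nat.mod_eq_of_lt hjn, Nat.div_eq_of_lt hjn]
    · intro k hk
      rw [if_neg]
      rintro rfl
      exact hk ⟨k / n, Nat.div_add_mod k n⟩
  convert hasSum_sum hresidue using 2 with k
  rw [sum_ite_eq, if_pos (mem_range.2 (Nat.mod_lt k hn))]

theorem hasSum_comp_div {α : Type*} [AddCommMonoid α] [TopologicalSpace α] [ContinuousAdd α]
    {n : ℕ} (hn : 0 < n) {g : ℕ → α} {a : α} (hg : HasSum g a) :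
    HasSum (fun k => g (k / n)) (n • a) := by
  simpa using hasSum_comp_div_mod (G := fun m _ => g m) hn (fun _ _ => hg)

theorem hasSum_comp_div_mul_pow {R : Type*} [Semiring R] [TopologicalSpace R]
    [IsTopologicalSemiring R] {n : ℕ} (hn : 0 < n) {a : ℕ → R} {z s : R}
    (ha : HasSum (fun m => a m * (z ^ n) ^ m) s) :
    HasSum (fun k => a (k / n) * z ^ k) (s * ∑ j ∈ range n, z ^ j) := by
  have h := hasSum_comp_div_mod hn fun j _ => ha.mul_right (z ^ j)
  simp only [mul_assoc, ← pow_mul, ← pow_add, Nat.div_add_mod] at h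
  rwa [mul_sum]

theorem summable_mul_pow_of_norm_le {a : ℕ → ℂ} {C : ℝ} (ha : ∀ k, ‖a k‖ ≤ C) {z : ℂ}
    (hz : ‖z‖ < 1) : Summable (fun k => a k * z ^ k) := by
  refine Summable.of_norm_bounded ((summable_geometric_of_lt_one (norm_nonneg z) hz).mul_left C)
    fun k => ?_
  rw [norm_mul, norm_pow]
  exact mul_le_mul_of_nonneg_right (ha k) (by positivity)

theorem hasFPowerSeriesOnBall_of_hasSum {a : ℕ → ℂ} {C : ℝ} (ha : ∀ k, ‖a k‖ ≤ C) {F : ℂ → ℂ}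
    (hF : ∀ z : ℂ, ‖z‖ < 1 → HasSum (fun k => a k * z ^ k) (F z)) :
    HasFPowerSeriesOnBall F (FormalMultilinearSeries.ofScalars ℂ a) 0 1 := by
  refine ⟨?_, one_pos, fun {y} hy => ?_⟩
  · refine FormalMultilinearSeries.le_radius_of_bound _ C fun k => ?_
    simpa [FormalMultilinearSeries.ofScalars_norm] using ha k
  · have hy : ‖y‖ < 1 := by simpa [← ENNReal.coe_one, enorm_lt_coe] using hy
    simpa [FormalMultilinearSeries.ofScalars_apply_eq, mul_comm] using hF y hy

theorem eq_of_hasSum_mul_pow {a b : ℕ → ℂ} {C D : ℝ} (ha : ∀ k, ‖a k‖ ≤ C)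
    (hb : ∀ k, ‖b k‖ ≤ D) {F : ℂ → ℂ}
    (haF : ∀ z : ℂ, ‖z‖ < 1 → HasSum (fun k => a k * z ^ k) (F z))
    (hbF : ∀ z : ℂ, ‖z‖ < 1 → HasSum (fun k => b k * z ^ k) (F z)) : a = b :=
  FormalMultilinearSeries.ofScalars_series_injective ℂ ℂ <|
    (hasFPowerSeriesOnBall_of_hasSum ha haF).hasFPowerSeriesAt.eq_formalMultilinearSeries
      (hasFPowerSeriesOnBall_of_hasSum hb hbF).hasFPowerSeriesAt

theorem hasSum_eval (f : H2) {z : ℂ} (hz : ‖z‖ < 1) :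
    HasSum (fun k => f k * z ^ k) (eval f z) :=
  (summable_mul_pow_of_norm_le (lp.norm_apply_le_norm two_ne_zero f) hz).hasSum

theorem apply_eq_of_eval_eq {n : ℕ} (hn : 0 < n) {f g : H2}
    (h : ∀ z : ℂ, ‖z‖ < 1 → eval g z = (∑ j ∈ range n, z ^ j) * eval f (z ^ n)) (k : ℕ) :
    g k = f (k / n) := by
  refine congrFun (eq_of_hasSum_mul_pow (lp.norm_apply_le_norm two_ne_zero g)
    (fun k => lp.norm_apply_le_norm two_ne_zero f (k / n)) (fun z hz => hasSum_eval g hz)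
    fun z hz => ?_) k
  have hzn : ‖z ^ n‖ < 1 := by
    rw [norm_pow]
    exact pow_lt_one₀ (norm_nonneg z) hz hn.ne'
  rw [h z hz, mul_comm]
  exact hasSum_comp_div_mul_pow hn (hasSum_eval f hzn)

theorem hasSum_sq_norm (f : H2) : HasSum (fun k => ‖f k‖ ^ 2) (‖f‖ ^ 2) := by
  simpa [Real.rpow_two] using lp.hasSum_norm (p := 2) (by norm_num) f

theorem eq_zero_of_forall_apply_eq (g : H2) (h : ∀ k, g k = g 0) : g = 0 := by
  have hconst := hasSum_sq_norm g
  simp_rw [h] at hconst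
  have h0 : ‖g 0‖ ^ 2 = 0 := by
    by_contra hne
    have := Finite.of_summable_const (lt_of_le_of_ne (by positivity) (Ne.symm hne))
      hconst.summable
    exact not_finite ℕ
  ext k
  simpa [h k] using h0

theorem norm_eq_sqrt_mul_norm_of_apply_eq {n : ℕ} (hn : 0 < n) {f g : H2}
    (h : ∀ k, g k = f (k / n)) : ‖g‖ = Real.sqrt n * ‖f‖ := by
  have hsq : ‖g‖ ^ 2 = n * ‖f‖ ^ 2 :=
    (hasSum_sq_norm g).unique (by simpa [h] using hasSum_comp_div hn (hasSum_sq_norm f))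
  rw [← Real.sqrt_sq (norm_nonneg g), hsq, Real.sqrt_mul (Nat.cast_nonneg n),
    Real.sqrt_sq (norm_nonneg f)]

noncomputable def pairDiff (i : ℕ) : H2 := lp.single 2 i (1 : ℂ) - lp.single 2 (i + 1) (1 : ℂ)

theorem inner_pairDiff_left (i : ℕ) (g : H2) : ⟪pairDiff i, g⟫ = g i - g (i + 1) := by
  simp [pairDiff, lp.inner_single_left]

theorem pairDiff_apply_of_ne {i k : ℕ} (hi : k ≠ i) (hi' : k ≠ i + 1) : pairDiff i k = 0 := by
  simp [pairDiff, lp.single_apply, hi, hi']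

theorem pairDiff_ne_zero (i : ℕ) : pairDiff i ≠ 0 := fun h => by
  simpa [pairDiff, lp.single_apply] using congrArg (fun g : H2 => g i) h

theorem mul_add_one_div_of_two_le {n : ℕ} (hn : 2 ≤ n) (m : ℕ) : (n * m + 1) / n = m := by
  rw [Nat.mul_add_div (by omega), Nat.div_eq_of_lt (by omega), add_zero]

theorem pairDiff_mul_apply_of_div_ne {n : ℕ} (hn : 2 ≤ n) {m k : ℕ} (h : k / n ≠ m) :
    pairDiff (n * m) k = 0 :=
  pairDiff_apply_of_ne (fun hk => h (hk ▸ Nat.mul_div_cancel_left m (by omega)))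
    fun hk => h (hk ▸ mul_add_one_div_of_two_le hn m)

theorem inner_pairDiff_mul_of_ne {n : ℕ} (hn : 2 ≤ n) {m m' : ℕ} (h : m ≠ m') :
    ⟪pairDiff (n * m), pairDiff (n * m')⟫ = 0 := by
  rw [inner_pairDiff_left,
    pairDiff_mul_apply_of_div_ne hn (by rwa [Nat.mul_div_cancel_left m (by omega)]),
    pairDiff_mul_apply_of_div_ne hn (by rwa [mul_add_one_div_of_two_le hn]), sub_self]

section CoefficientInflation

variable {n : ℕ} {T : H2 →L[ℂ] H2} (hT : ∀ f : H2, ∀ k, T f k = f (k / n))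
include hT

theorem pow_apply_eq_apply_div_pow (i : ℕ) (f : H2) (k : ℕ) :
    (T ^ i) f k = f (k / n ^ i) := by
  induction i generalizing k with
  | zero => simp
  | succ i ih => rw [pow_succ', mul_apply_eq_comp, hT, ih, Nat.div_div_eq_div_mul,
      ← pow_succ']

theorem iInter_range_pow_eq_singleton_zero (hn : 2 ≤ n) :
    ⋂ i : ℕ, Set.range ⇑(T ^ i) = {0} := by
  refine Set.Subset.antisymm (fun g hg => ?_)
    (Set.singleton_subset_iff.2 (Set.mem_iInter.2 fun i => ⟨0, map_zero _⟩))
  refine eq_zero_of_forall_apply_eq g fun k => ?_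
  obtain ⟨f, rfl⟩ := Set.mem_iInter.1 hg k
  rw [pow_apply_eq_apply_div_pow hT, pow_apply_eq_apply_div_pow hT, Nat.zero_div,
    Nat.div_eq_of_lt (Nat.lt_pow_self (by omega))]

theorem pairDiff_mul_mem_orthogonal_range (hn : 2 ≤ n) (m : ℕ) :
    pairDiff (n * m) ∈ (LinearMap.range (T : H2 →ₗ[ℂ] H2))ᗮ := by
  rw [Submodule.mem_orthogonal']
  rintro _ ⟨f, rfl⟩
  rw [ContinuousLinearMap.coe_coe, inner_pairDiff_left, hT, hT,
    Nat.mul_div_cancel_left m (by omega), mul_add_one_div_of_two_le hn, sub_self]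

theorem not_finiteDimensional_orthogonal_range (hn : 2 ≤ n) :
    ¬ FiniteDimensional ℂ (LinearMap.range (T : H2 →ₗ[ℂ] H2))ᗮ := by
  intro _
  let v : ℕ → (LinearMap.range (T : H2 →ₗ[ℂ] H2))ᗮ :=
    fun m => ⟨pairDiff (n * m), pairDiff_mul_mem_orthogonal_range hT hn m⟩
  have hv : LinearIndependent ℂ v :=
    .of_comp (Submodule.subtype _) <|
      linearIndependent_of_ne_zero_of_inner_eq_zero (fun _ => pairDiff_ne_zero _)
        fun _ _ h => inner_pairDiff_mul_of_ne hn h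
  exact Module.Finite.not_linearIndependent_of_infinite v hv

end CoefficientInflation

/-- for `n ≥ 2`, `W_n/√n` is a pure isometry (unilateral shift) of
infinite multiplicity: `‖W_n f‖ = √n ‖f‖`, `⋂_k (W_n)^k(H²) = {0}`, and the wandering
subspace `H² ⊖ W_n(H²)` is infinite dimensional. -/
theorem Wn_pure_shift_infinite_multiplicity (W : ℕ → H2 →L[ℂ] H2)
    (hW : ∀ n : ℕ, 1 ≤ n → ∀ f : H2, ∀ z : ℂ, ‖z‖ < 1 →
      eval (W n f) z = (∑ j ∈ Finset.range n, z ^ j) * eval f (z ^ n))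
    (n : ℕ) (hn : 2 ≤ n) :
    (∀ f : H2, ‖W n f‖ = Real.sqrt n * ‖f‖) ∧
    (⋂ k : ℕ, Set.range ⇑(W n ^ k)) = ({0} : Set H2) ∧
    ¬ FiniteDimensional ℂ
        ((LinearMap.range ((W n : H2 →L[ℂ] H2) : H2 →ₗ[ℂ] H2))ᗮ : Submodule ℂ H2) := by
  have hWn : ∀ f : H2, ∀ k, W n f k = f (k / n) := fun f =>
    apply_eq_of_eval_eq (by omega) (hW n (by omega) f)
  exact ⟨fun f => norm_eq_sqrt_mul_norm_of_apply_eq (by omega) (hWn f),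
    iInter_range_pow_eq_singleton_zero hWn hn, not_finiteDimensional_orthogonal_range hWn hn⟩
end

section
/- For every k ≥ 1, the intersection ⋂_{n=k+1}^∞ ker(W_n*) equals the linear span of {1 − z^m : 1 ≤ m ≤ k}, where W_n* is the Hilbert-space adjoint of W_n on H². -/
open Filter Topology
open scoped ComplexInnerProductSpace

/-! Taking Taylor coefficients, `W_n e_q = ∑_{j<n} e_{qn+j}`, hence `(W_n* g)_q = ∑_{j<n} g_{qn+j}`:
`g ∈ ker W_n*` iff all consecutive blocks of length `n` of its coefficients sum to zero. For all
`n > k` at once, the blocks starting at `0` already force `g_i = 0` for `i > k` and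
`g_0 + ⋯ + g_k = 0`, and conversely these two conditions make every such block sum vanish. They
describe the polynomials of degree at most `k` vanishing at `1`, the span of the `1 - z^m`. -/

open Finset

section BlockSums

variable {M : Type*} [AddCommGroup M] {g : ℕ → M} {k : ℕ}

lemma forall_sum_range_eq_zero_iff :
    (∀ n, k + 1 ≤ n → ∑ j ∈ range n, g j = 0) ↔
      (∀ i, k < i → g i = 0) ∧ ∑ j ∈ range (k + 1), g j = 0 := by
  refine ⟨fun h => ⟨fun i hi => ?_, h _ le_rfl⟩, fun ⟨hvanish, hsum⟩ n hn => ?_⟩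
  · simpa [sum_range_succ, h i hi] using h (i + 1) (by omega)
  · rw [← sum_range_add_sum_Ico _ hn, hsum, zero_add]
    exact sum_eq_zero fun i hi => hvanish i (mem_Ico.mp hi).1

lemma forall_block_sum_eq_zero_iff :
    (∀ n, k + 1 ≤ n → ∀ q, ∑ j ∈ range n, g (q * n + j) = 0) ↔
      (∀ i, k < i → g i = 0) ∧ ∑ j ∈ range (k + 1), g j = 0 := by
  rw [← forall_sum_range_eq_zero_iff]
  refine ⟨fun h n hn => by simpa using h n hn 0, fun h n hn q => ?_⟩
  rcases q with _ | q
  · simpa using h n hn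
  · have hvanish := (forall_sum_range_eq_zero_iff.mp h).1
    refine sum_eq_zero fun j _ => hvanish _ ?_
    nlinarith

end BlockSums

namespace H2

lemma summable_coeff_mul_pow (f : H2) {z : ℂ} (hz : ‖z‖ < 1) :
    Summable fun n : ℕ => f n * z ^ n := by
  refine Summable.of_norm <| ((summable_geometric_of_lt_one (norm_nonneg z) hz).mul_left ‖f‖)
    |>.of_nonneg_of_le (fun n => norm_nonneg _) fun n => ?_
  rw [norm_mul, norm_pow]
  gcongr
  exact lp.norm_apply_le_norm two_ne_zero f n

lemma hasFPowerSeriesAt_eval (f : H2) :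
    HasFPowerSeriesAt (eval f) (FormalMultilinearSeries.ofScalars ℂ fun n => f n) 0 := by
  set P := FormalMultilinearSeries.ofScalars ℂ fun n => f n
  have hsum : P.sum = eval f := FormalMultilinearSeries.ofScalarsSum_eq_tsum _
  have hrad : ((1 / 2 : NNReal) : ENNReal) ≤ P.radius := by
    refine P.le_radius_of_bound ‖f‖ fun n => ?_
    rw [FormalMultilinearSeries.ofScalars_norm]
    calc ‖f n‖ * ((1 / 2 : NNReal) : ℝ) ^ n ≤ ‖f‖ * 1 := by
          gcongr
          · exact lp.norm_apply_le_norm two_ne_zero f n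
          · exact pow_le_one₀ (by positivity) (by norm_num)
      _ = ‖f‖ := mul_one _
  simpa [hsum] using (P.hasFPowerSeriesOnBall (hrad.trans_lt' (by norm_num))).hasFPowerSeriesAt

lemma eq_of_eval_eq {f g : H2} (h : ∀ z : ℂ, ‖z‖ < 1 → eval f z = eval g z) : f = g := by
  have heq : eval f =ᶠ[𝓝 0] eval g := by
    filter_upwards [Metric.ball_mem_nhds (0 : ℂ) one_pos] with z hz
    exact h z (mem_ball_zero_iff.mp hz)
  have hcoeff := ((hasFPowerSeriesAt_eval f).congr heq).eq_formalMultilinearSeries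
    (hasFPowerSeriesAt_eval g)
  exact lp.ext (FormalMultilinearSeries.ofScalars_series_injective ℂ ℂ hcoeff)

lemma eval_single (i : ℕ) (z : ℂ) : eval (lp.single 2 i 1) z = z ^ i := by
  rw [eval, tsum_eq_single i fun n hn => by rw [lp.single_apply_ne _ _ _ hn, zero_mul],
    lp.single_apply_self, one_mul]

lemma eval_sum {ι : Type*} (s : Finset ι) (F : ι → H2) {z : ℂ} (hz : ‖z‖ < 1) :
    eval (∑ m ∈ s, F m) z = ∑ m ∈ s, eval (F m) z := by
  simp only [eval, lp.coeFn_sum, Finset.sum_apply, Finset.sum_mul]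
  exact Summable.tsum_finsetSum fun m _ => summable_coeff_mul_pow (F m) hz

section Adjoint

variable {T : H2 →L[ℂ] H2} {n : ℕ}
  (hT : ∀ f : H2, ∀ z : ℂ, ‖z‖ < 1 → eval (T f) z = (∑ j ∈ range n, z ^ j) * eval f (z ^ n))
include hT

lemma apply_single_of_eval_eq (q : ℕ) :
    T (lp.single 2 q 1) = ∑ j ∈ range n, lp.single 2 (q * n + j) 1 := by
  refine eq_of_eval_eq fun z hz => ?_
  rw [hT _ z hz, eval_single, eval_sum _ _ hz, sum_mul]
  refine sum_congr rfl fun j _ => ?_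
  rw [eval_single, ← pow_mul, ← pow_add, mul_comm n, add_comm]

lemma adjoint_apply_of_eval_eq (g : H2) (q : ℕ) :
    ContinuousLinearMap.adjoint T g q = ∑ j ∈ range n, g (q * n + j) := by
  have hcoeff : ∀ (h : H2) (i : ℕ), h i = ⟪lp.single 2 i (1 : ℂ), h⟫ := by
    simp [lp.inner_single_left]
  simp only [hcoeff, ContinuousLinearMap.adjoint_inner_right, apply_single_of_eval_eq hT,
    sum_inner]

lemma mem_ker_adjoint_iff_of_eval_eq (g : H2) :
    g ∈ LinearMap.ker (ContinuousLinearMap.adjoint T : H2 →ₗ[ℂ] H2) ↔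
      ∀ q : ℕ, ∑ j ∈ range n, g (q * n + j) = 0 := by
  simp only [LinearMap.mem_ker, ContinuousLinearMap.coe_coe, ← adjoint_apply_of_eval_eq hT]
  exact ⟨fun h q => by simp [h], fun h => lp.ext (funext h)⟩

end Adjoint

/-- Polynomials of degree at most `k` vanishing at `1`. -/
def polyVanishingAtOne (k : ℕ) : Submodule ℂ H2 where
  carrier := {g | (∀ i, k < i → g i = 0) ∧ ∑ j ∈ range (k + 1), g j = 0}
  zero_mem' := by simp
  add_mem' := fun ha hb =>
    ⟨fun i hi => by simp [ha.1 i hi, hb.1 i hi],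
      by simp only [lp.coeFn_add, Pi.add_apply, sum_add_distrib, ha.2, hb.2, add_zero]⟩
  smul_mem' := fun c g hg => ⟨fun i hi => by simp [hg.1 i hi], by simp [← mul_sum, hg.2]⟩

lemma mem_polyVanishingAtOne {k : ℕ} {g : H2} :
    g ∈ polyVanishingAtOne k ↔ (∀ i, k < i → g i = 0) ∧ ∑ j ∈ range (k + 1), g j = 0 :=
  Iff.rfl

lemma span_eq_polyVanishingAtOne (p : ℕ → H2)
    (hp : ∀ m j : ℕ, p m j = (if j = 0 then (1 : ℂ) else 0) - (if j = m then 1 else 0))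
    (k : ℕ) :
    Submodule.span ℂ (p '' {m : ℕ | 1 ≤ m ∧ m ≤ k}) = polyVanishingAtOne k := by
  apply le_antisymm
  · rw [Submodule.span_le]
    rintro _ ⟨m, ⟨hm1, hmk⟩, rfl⟩
    refine ⟨fun i hi => ?_, ?_⟩
    · rw [hp, if_neg (by omega), if_neg (by omega), sub_zero]
    · simp [hp, sum_sub_distrib, hmk]
  · rintro g ⟨hvanish, hsum⟩
    have hrepr : g = ∑ m ∈ range k, (-g (m + 1)) • p (m + 1) := by
      ext j
      simp only [lp.coeFn_sum, Finset.sum_apply, lp.coeFn_smul, Pi.smul_apply, smul_eq_mul, hp]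
      rcases j with _ | i
      · rw [sum_range_succ', add_eq_zero_iff_neg_eq'] at hsum
        simp [← hsum]
      · by_cases hi : i < k
        · simp [hi]
        · simp [hi, hvanish (i + 1) (by omega)]
    rw [hrepr]
    exact Submodule.sum_mem _ fun m hm => Submodule.smul_mem _ _ <|
      Submodule.subset_span ⟨m + 1, by simpa using hm, rfl⟩

end H2

theorem inter_ker_adjoint_general (W : ℕ → H2 →L[ℂ] H2)
    (hW : ∀ n : ℕ, 1 ≤ n → ∀ f : H2, ∀ z : ℂ, ‖z‖ < 1 →
      eval (W n f) z = (∑ j ∈ Finset.range n, z ^ j) * eval f (z ^ n))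
    (p : ℕ → H2)
    (hp : ∀ m j : ℕ, p m j = (if j = 0 then (1 : ℂ) else 0) - (if j = m then 1 else 0))
    (k : ℕ) :
    (⨅ (n : ℕ) (_ : k + 1 ≤ n), LinearMap.ker ((ContinuousLinearMap.adjoint (W n) : H2 →L[ℂ] H2) : H2 →ₗ[ℂ] H2))
      = Submodule.span ℂ (p '' {m : ℕ | 1 ≤ m ∧ m ≤ k}) := by
  ext g
  rw [H2.span_eq_polyVanishingAtOne p hp, H2.mem_polyVanishingAtOne,
    ← forall_block_sum_eq_zero_iff]
  simp only [Submodule.mem_iInf]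
  exact forall₂_congr fun n hn => H2.mem_ker_adjoint_iff_of_eval_eq (hW n (by omega)) g

/-- for `k ≥ 1`, `⋂_(n ≥ k+1) ker W_n* = span{1 - z^m : 1 ≤ m ≤ k}`,
where `p m` has the Taylor coefficients of `1 - z^m`. -/
theorem inter_ker_adjoint (W : ℕ → H2 →L[ℂ] H2)
    (hW : ∀ n : ℕ, 1 ≤ n → ∀ f : H2, ∀ z : ℂ, ‖z‖ < 1 →
      eval (W n f) z = (∑ j ∈ Finset.range n, z ^ j) * eval f (z ^ n))
    (p : ℕ → H2)
    (hp : ∀ m j : ℕ, p m j = (if j = 0 then (1 : ℂ) else 0) - (if j = m then 1 else 0))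
    (k : ℕ) (hk : 1 ≤ k) :
    (⨅ (n : ℕ) (_ : k + 1 ≤ n), LinearMap.ker ((ContinuousLinearMap.adjoint (W n) : H2 →L[ℂ] H2) : H2 →ₗ[ℂ] H2))
      = Submodule.span ℂ (p '' {m : ℕ | 1 ≤ m ∧ m ≤ k}) :=
  inter_ker_adjoint_general W hW p hp k
end

section
/- The intersection ⋂_{n=2}^∞ ker(W_n*) is the one-dimensional subspace spanned by the function 1 − z, where W_n* is the adjoint of W_n on H². -/
open Filter Topology
open scoped ComplexInnerProductSpace

/-!
Comparing Taylor coefficients on the disk, the functional equation for `W_n` says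
`(W_n f)ₖ = f_{⌊k/n⌋}`. So `W_n 1 = 1 + z + ⋯ + z^{n-1}`, and `g ∈ ker W_n*` gives
`g₀ + ⋯ + g_{n-1} = ⟪W_n 1, g⟫ = 0`; for all `n ≥ 2` this forces `g₁ = -g₀` and `gₖ = 0` for
`k ≥ 2`, i.e. `g = g₀ (1 - z)`. Conversely `⟪W_n f, 1 - z⟫ = conj (f₀ - f₀) = 0` since the first two
coefficients of `W_n f` are both `f₀` when `n ≥ 2`.
-/

open Finset

section PowerSeries

variable {𝕜 : Type*} [NontriviallyNormedField 𝕜] [CompleteSpace 𝕜]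

theorem hasFPowerSeriesAt_tsum_mul_pow_of_bounded {c : ℕ → 𝕜} {C : ℝ}
    (hc : ∀ n, ‖c n‖ ≤ C) :
    HasFPowerSeriesAt (fun z : 𝕜 => ∑' n, c n * z ^ n)
      (FormalMultilinearSeries.ofScalars 𝕜 c) 0 := by
  have hradius : (1 : ENNReal) ≤ (FormalMultilinearSeries.ofScalars 𝕜 c).radius :=
    FormalMultilinearSeries.le_radius_of_bound _ C fun n => by
      simpa [FormalMultilinearSeries.ofScalars_norm] using hc n
  convert ((FormalMultilinearSeries.ofScalars 𝕜 c).hasFPowerSeriesOnBall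
    (one_pos.trans_le hradius)).hasFPowerSeriesAt using 1
  ext z
  simp [FormalMultilinearSeries.sum, mul_comm]

theorem eq_of_tsum_mul_pow_eq_of_bounded {c d : ℕ → 𝕜} {C D : ℝ}
    (hc : ∀ n, ‖c n‖ ≤ C) (hd : ∀ n, ‖d n‖ ≤ D)
    (h : ∀ z : 𝕜, ‖z‖ < 1 → ∑' n, c n * z ^ n = ∑' n, d n * z ^ n) : c = d := by
  have hev : (fun z : 𝕜 => ∑' n, c n * z ^ n) =ᶠ[𝓝 0] fun z => ∑' n, d n * z ^ n := by
    filter_upwards [Metric.ball_mem_nhds (0 : 𝕜) one_pos] with z hz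
    exact h z (mem_ball_zero_iff.mp hz)
  exact FormalMultilinearSeries.ofScalars_series_injective 𝕜 𝕜
    (((hasFPowerSeriesAt_tsum_mul_pow_of_bounded hc).congr hev).eq_formalMultilinearSeries
      (hasFPowerSeriesAt_tsum_mul_pow_of_bounded hd))

end PowerSeries

theorem summable_norm_mul_pow_of_bounded {R : Type*} [NormedRing R] [NormOneClass R]
    {c : ℕ → R} {C : ℝ} (hc : ∀ n, ‖c n‖ ≤ C) {w : R} (hw : ‖w‖ < 1) :
    Summable fun m => ‖c m * w ^ m‖ := by
  refine .of_nonneg_of_le (fun _ => norm_nonneg _) (fun m => ?_)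
    ((summable_geometric_of_lt_one (norm_nonneg w) hw).mul_left C)
  calc ‖c m * w ^ m‖ ≤ ‖c m‖ * ‖w‖ ^ m :=
        (norm_mul_le _ _).trans (by gcongr; exact norm_pow_le _ _)
    _ ≤ C * ‖w‖ ^ m := by gcongr; exact hc m

open Fin.NatCast in
theorem tsum_mul_pow_div_eq {R : Type*} [NormedCommRing R] [CompleteSpace R] (c : ℕ → R)
    (n : ℕ) [NeZero n] (z : R) (hc : Summable fun m => ‖c m * (z ^ n) ^ m‖) :
    ∑' k, c (k / n) * z ^ k = (∑ j ∈ range n, z ^ j) * ∑' m, c m * (z ^ n) ^ m := by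
  have hsplit (k : ℕ) :
      c (k / n) * z ^ k = z ^ ((k : Fin n) : ℕ) * (c (k / n) * (z ^ n) ^ (k / n)) := by
    rw [Fin.val_natCast, ← pow_mul, mul_left_comm, ← pow_add, Nat.mod_add_div]
  calc ∑' k, c (k / n) * z ^ k
      = ∑' q : Fin n × ℕ, z ^ (q.1 : ℕ) * (c q.2 * (z ^ n) ^ q.2) := by
        rw [← ((Nat.divModEquiv n).trans (Equiv.prodComm _ _)).tsum_eq]
        exact tsum_congr hsplit
    _ = (∑' r : Fin n, z ^ (r : ℕ)) * ∑' m, c m * (z ^ n) ^ m :=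
        (tsum_mul_tsum_of_summable_norm (f := fun r : Fin n => z ^ (r : ℕ)) .of_finite hc).symm
    _ = (∑ j ∈ range n, z ^ j) * ∑' m, c m * (z ^ n) ^ m := by
        rw [tsum_fintype, Fin.sum_univ_eq_sum_range]

theorem apply_eq_apply_div_of_eval_eq {n : ℕ} [NeZero n] {f g : H2}
    (h : ∀ z : ℂ, ‖z‖ < 1 → eval g z = (∑ j ∈ range n, z ^ j) * eval f (z ^ n)) (k : ℕ) :
    g k = f (k / n) := by
  refine congrFun (eq_of_tsum_mul_pow_eq_of_bounded (c := fun k => g k) (d := fun k => f (k / n))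
    (lp.norm_apply_le_norm two_ne_zero g) (fun k => lp.norm_apply_le_norm two_ne_zero f (k / n))
    fun z hz => ?_) k
  have hzn : ‖z ^ n‖ < 1 := by
    rw [norm_pow]; exact pow_lt_one₀ (norm_nonneg z) hz (NeZero.ne n)
  rw [tsum_mul_pow_div_eq _ n z
    (summable_norm_mul_pow_of_bounded (lp.norm_apply_le_norm two_ne_zero f) hzn)]
  exact h z hz

theorem mem_ker_adjoint_iff {𝕜 E F : Type*} [RCLike 𝕜] [NormedAddCommGroup E]
    [NormedAddCommGroup F] [InnerProductSpace 𝕜 E] [InnerProductSpace 𝕜 F] [CompleteSpace E]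
    [CompleteSpace F] (T : E →L[𝕜] F) (g : F) :
    g ∈ LinearMap.ker (ContinuousLinearMap.adjoint T : F →ₗ[𝕜] E) ↔ ∀ f, inner 𝕜 (T f) g = 0 := by
  rw [← T.orthogonal_range, Submodule.mem_orthogonal]
  simp

section StretchedCoefficients

variable {n : ℕ} {T : H2 →L[ℂ] H2}

theorem inner_apply_single_zero (hn : n ≠ 0) (hT : ∀ f k, T f k = f (k / n)) (g : H2) :
    ⟪T (lp.single 2 0 1), g⟫ = ∑ k ∈ range n, g k := by
  have hcoeff (k : ℕ) : T (lp.single 2 0 1) k = if k < n then 1 else 0 := by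
    simp only [hT, lp.single_apply, Pi.single_apply,
      Nat.div_eq_zero_iff_lt (Nat.pos_of_ne_zero hn)]
  rw [lp.inner_eq_tsum, tsum_eq_sum (s := range n) fun k hk => by
    simp [hcoeff, not_lt.mp (mt mem_range.mpr hk)]]
  exact sum_congr rfl fun k hk => by simp [hcoeff, mem_range.mp hk]

theorem inner_apply_eq_zero (hn : 2 ≤ n) (hT : ∀ f k, T f k = f (k / n)) {p : H2}
    (hp : ∀ j : ℕ, p j = (if j = 0 then (1 : ℂ) else 0) - (if j = 1 then 1 else 0)) (f : H2) :
    ⟪T f, p⟫ = 0 := by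
  rw [lp.inner_eq_tsum, tsum_eq_sum (s := {0, 1}) fun k hk => by simp_all]
  simp [hp, hT, Nat.div_eq_of_lt (show 1 < n by omega)]

end StretchedCoefficients

theorem eq_smul_of_sum_range_eq_zero {p : H2}
    (hp : ∀ j : ℕ, p j = (if j = 0 then (1 : ℂ) else 0) - (if j = 1 then 1 else 0)) {g : H2}
    (hg : ∀ n, 2 ≤ n → ∑ k ∈ range n, g k = 0) : g = g 0 • p := by
  have hg1 : g 1 = -g 0 := eq_neg_of_add_eq_zero_right (by simpa [sum_range_succ] using hg 2 le_rfl)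
  have hg2 (k : ℕ) (hk : 2 ≤ k) : g k = 0 := by
    simpa [sum_range_succ, hg k hk] using hg (k + 1) (by omega)
  ext (_ | _ | k)
  · simp [hp]
  · simp [hp, hg1]
  · simp [hp, hg2 (k + 2) (by omega)]

/-- `⋂_(n ≥ 2) ker W_n*` is the one-dimensional subspace spanned by
`1 - z` (the element `p` with Taylor coefficients of `1 - z`). -/
theorem inter_ker_adjoint_one_minus_z (W : ℕ → H2 →L[ℂ] H2)
    (hW : ∀ n : ℕ, 1 ≤ n → ∀ f : H2, ∀ z : ℂ, ‖z‖ < 1 →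
      eval (W n f) z = (∑ j ∈ Finset.range n, z ^ j) * eval f (z ^ n))
    (p : H2)
    (hp : ∀ j : ℕ, p j = (if j = 0 then (1 : ℂ) else 0) - (if j = 1 then 1 else 0)) :
    (⨅ (n : ℕ) (_ : 2 ≤ n), LinearMap.ker ((ContinuousLinearMap.adjoint (W n) : H2 →L[ℂ] H2) : H2 →ₗ[ℂ] H2))
      = Submodule.span ℂ {p} := by
  have hWk (n : ℕ) (hn : 2 ≤ n) (f : H2) (k : ℕ) : W n f k = f (k / n) :=
    have : NeZero n := ⟨by omega⟩
    apply_eq_apply_div_of_eval_eq (hW n (by omega) f) k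
  ext g
  simp only [Submodule.mem_iInf, mem_ker_adjoint_iff, Submodule.mem_span_singleton]
  constructor
  · intro hg
    refine ⟨g 0, (eq_smul_of_sum_range_eq_zero hp fun n hn => ?_).symm⟩
    rw [← inner_apply_single_zero (by omega) (hWk n hn)]
    exact hg n hn _
  · rintro ⟨a, rfl⟩ n hn f
    rw [inner_smul_right, inner_apply_eq_zero hn (hWk n hn) hp, mul_zero]
end

section
/- For all n ≥ 1 and k ≥ 2, the identity W_n h_k = h_{nk} − h_n holds in H², where h_k(z) = (1/(1 − z)) log((1 + z + ⋯ + z^{k−1})/k) and (W_n f)(z) = (1 + z + ⋯ + z^{n−1}) f(z^n). -/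
/-!
Multiplying by `1 - z`, the identity becomes `(1 - z) h_{nk} = (1 - z) h_n + (1 - z^n) h_k(z^n)`,
using `(1 - z)(1 + ⋯ + z^{n-1}) = 1 - z^n`. By the defining property of the `h_m` and the
factorisation `1 + ⋯ + z^{nk-1} = (1 + ⋯ + z^{n-1})(1 + z^n + ⋯ + z^{n(k-1)})`, both sides have the
same exponential on the disk, and at `0` they agree because `log (nk) = log n + log k`. Two
holomorphic functions on a connected open set with equal exponentials that agree at one point
have equal derivatives, hence coincide; and an element of `H²` is determined by its values on
the disk.
-/

open Filter Topology
open scoped ComplexInnerProductSpace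

open Finset in
theorem geom_sum_mul_geom_sum_pow {R : Type*} [CommSemiring R] (x : R) (m n : ℕ) :
    (∑ i ∈ range m, x ^ i) * ∑ j ∈ range n, (x ^ m) ^ j = ∑ i ∈ range (m * n), x ^ i := by
  induction n with
  | zero => simp
  | succ n ih =>
    rw [sum_range_succ, mul_add, ih, Nat.mul_succ, sum_range_add, ← pow_mul, sum_mul]
    simp only [pow_add, mul_comm]

theorem IsOpen.eqOn_of_cexp_eq {s : Set ℂ} (hs : IsOpen s) (hs' : IsPreconnected s) {f g : ℂ → ℂ}
    (hf : DifferentiableOn ℂ f s) (hg : DifferentiableOn ℂ g s)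
    (hfg : s.EqOn (fun z => Complex.exp (f z)) (fun z => Complex.exp (g z)))
    {x : ℂ} (hx : x ∈ s) (hfgx : f x = g x) : s.EqOn f g := by
  refine hs.eqOn_of_deriv_eq hs' hf hg (fun z hz => ?_) hx hfgx
  have hf' := (hf.differentiableAt (hs.mem_nhds hz)).hasDerivAt.cexp
  have hg' := (hg.differentiableAt (hs.mem_nhds hz)).hasDerivAt.cexp
  have := hf'.unique (hg'.congr_of_eventuallyEq (eventually_of_mem (hs.mem_nhds hz) hfg))
  rw [show Complex.exp (f z) = Complex.exp (g z) from hfg hz] at this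
  exact mul_left_cancel₀ (Complex.exp_ne_zero _) this

theorem summable_eval (f : H2) {z : ℂ} (hz : ‖z‖ < 1) : Summable fun i => f i * z ^ i := by
  refine Summable.of_norm_bounded ((summable_geometric_of_lt_one (norm_nonneg _) hz).mul_left ‖f‖)
    fun i => ?_
  rw [norm_mul, norm_pow]
  gcongr
  exact lp.norm_apply_le_norm two_ne_zero f i

theorem eval_sub (f g : H2) {z : ℂ} (hz : ‖z‖ < 1) : eval (f - g) z = eval f z - eval g z := by
  simp only [eval, lp.coeFn_sub, Pi.sub_apply, sub_mul]
  exact (summable_eval f hz).tsum_sub (summable_eval g hz)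

theorem hasFPowerSeriesOnBall_eval (f : H2) :
    HasFPowerSeriesOnBall (eval f) (FormalMultilinearSeries.ofScalars ℂ fun i => f i) 0 1 where
  r_le := by
    refine FormalMultilinearSeries.le_radius_of_bound _ ‖f‖ fun i => ?_
    rw [FormalMultilinearSeries.ofScalars_norm, NNReal.coe_one, one_pow, mul_one]
    exact lp.norm_apply_le_norm two_ne_zero f i
  r_pos := one_pos
  hasSum {y} hy := by
    rw [← ENNReal.coe_one, Metric.eball_coe, mem_ball_zero_iff, NNReal.coe_one] at hy
    simpa [FormalMultilinearSeries.ofScalars_apply_eq, eval, mul_comm] using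
      (summable_eval f hy).hasSum

theorem differentiableOn_eval (f : H2) : DifferentiableOn ℂ (eval f) (Metric.ball 0 1) := by
  have := (hasFPowerSeriesOnBall_eval f).analyticOnNhd.differentiableOn
  rwa [← ENNReal.coe_one, Metric.eball_coe, NNReal.coe_one] at this

theorem eq_of_eval_eq {f g : H2} (hfg : ∀ z : ℂ, ‖z‖ < 1 → eval f z = eval g z) : f = g := by
  have hfg' : eval f =ᶠ[𝓝 0] eval g :=
    eventually_of_mem (Metric.ball_mem_nhds 0 one_pos) fun z hz => hfg z (mem_ball_zero_iff.mp hz)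
  have := (hasFPowerSeriesOnBall_eval f).hasFPowerSeriesAt.eq_formalMultilinearSeries_of_eventually
    (hasFPowerSeriesOnBall_eval g).hasFPowerSeriesAt hfg'
  exact lp.ext (FormalMultilinearSeries.ofScalars_series_injective ℂ ℂ this)

/-- `W_n h_k = h_(nk) - h_n` for all `n ≥ 1` and `k ≥ 2`. -/
theorem Wn_hk (h : ℕ → H2)
    (hh : ∀ k : ℕ, 1 ≤ k → eval (h k) 0 = -Real.log k ∧
      ∀ z : ℂ, ‖z‖ < 1 →
        Complex.exp ((1 - z) * eval (h k) z) = (∑ j ∈ Finset.range k, z ^ j) / k)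
    (W : ℕ → H2 →L[ℂ] H2)
    (hW : ∀ n : ℕ, 1 ≤ n → ∀ f : H2, ∀ z : ℂ, ‖z‖ < 1 →
      eval (W n f) z = (∑ j ∈ Finset.range n, z ^ j) * eval f (z ^ n))
    (n k : ℕ) (hn : 1 ≤ n) (hk : 2 ≤ k) :
    W n (h k) = h (n * k) - h n := by
  have hk1 : 1 ≤ k := by omega
  have hnk : 1 ≤ n * k := Nat.mul_pos hn hk1
  have hdiff (f : H2) : DifferentiableOn ℂ (fun z => (1 - z) * eval f z) (Metric.ball 0 1) :=
    ((differentiableOn_const 1).sub differentiableOn_id).mul (differentiableOn_eval f)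
  have hW' (z : ℂ) (hz : ‖z‖ < 1) :
      (1 - z) * eval (W n (h k)) z = (1 - z ^ n) * eval (h k) (z ^ n) := by
    rw [hW n hn _ z hz, ← mul_assoc, mul_neg_geom_sum]
  have key : (Metric.ball (0 : ℂ) 1).EqOn (fun z => (1 - z) * eval (h (n * k)) z)
      (fun z => (1 - z) * eval (h n) z + (1 - z) * eval (W n (h k)) z) := by
    refine Metric.isOpen_ball.eqOn_of_cexp_eq (convex_ball 0 1).isPreconnected (hdiff _)
      ((hdiff _).add (hdiff _)) (fun z hz => ?_) (Metric.mem_ball_self one_pos) ?_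
    · have hz : ‖z‖ < 1 := mem_ball_zero_iff.mp hz
      have hzn : ‖z ^ n‖ < 1 := norm_pow z n ▸ pow_lt_one₀ (norm_nonneg z) hz (by omega)
      simp only [Complex.exp_add, hW' z hz, (hh _ hnk).2 z hz, (hh n hn).2 z hz,
        (hh k hk1).2 _ hzn, ← geom_sum_mul_geom_sum_pow, Nat.cast_mul]
      ring
    · have hW0 : eval (W n (h k)) 0 = eval (h k) 0 := by
        simp [hW n hn _ 0 (by simp), show n ≠ 0 by omega]
      simp only [sub_zero, one_mul, hW0, (hh _ hnk).1, (hh n hn).1, (hh k hk1).1, Nat.cast_mul]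
      rw [Real.log_mul (by positivity) (by positivity)]
      push_cast
      ring
  refine eq_of_eval_eq fun z hz => ?_
  have h1z : 1 - z ≠ 0 := sub_ne_zero.mpr (by rintro rfl; simp at hz)
  rw [eval_sub _ _ hz]
  exact mul_left_cancel₀ h1z (by linear_combination -key (mem_ball_zero_iff.mpr hz))
end

section
/- Every function in the closure of M = span{h_k − h_ℓ : k, ℓ ≥ 2} in H² is orthogonal to 1 − z; that is, M̄ ⊆ {1 − z}^⊥, so the closure of M is a proper subspace of H². -/
open Filter Topology
open scoped ComplexInnerProductSpace

/-! Since `⟪1 - z, f⟫ = f(0) - f'(0)`, it suffices that `h_k(0) - h_k'(0)` does not depend on `k`.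
Differentiating `exp((1 - z) h_k(z)) = (1 + z + ⋯ + z^{k-1}) / k` at `0` gives
`h_k'(0) - h_k(0) = (1/k) / (1/k) = 1` for every `k ≥ 2`, so every `h_k - h_ℓ` lies in the closed
subspace `{1 - z}ᗮ`, and hence so does the closure of their span. It misses `1 - z ≠ 0`. -/

open FormalMultilinearSeries

lemma eval_eq_ofScalarsSum (f : H2) : eval f = ofScalarsSum fun n => f n := by
  rw [ofScalarsSum_eq_tsum]
  rfl

lemma eval_zero (f : H2) : eval f 0 = f 0 := by
  simp [eval_eq_ofScalarsSum]

lemma one_le_radius_ofScalars (f : H2) : 1 ≤ (ofScalars ℂ fun n => f n).radius := by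
  refine ENNReal.coe_one ▸ le_radius_of_bound _ ‖f‖ fun n => ?_
  rw [ofScalars_norm, NNReal.coe_one, one_pow, mul_one]
  exact lp.norm_apply_le_norm two_ne_zero f n

lemma hasDerivAt_eval_zero (f : H2) : HasDerivAt (eval f) (f 1) 0 := by
  have hr : 0 < (ofScalars ℂ fun n => f n).radius := one_pos.trans_le (one_le_radius_ofScalars f)
  simpa [eval_eq_ofScalarsSum, ofScalarsSum] using
    ((ofScalars ℂ fun n => f n).hasFPowerSeriesOnBall hr).hasFPowerSeriesAt.hasDerivAt

lemma coeff_one_sub_coeff_zero_eq {f : H2} {g : ℂ → ℂ} {g' : ℂ} (hg : HasDerivAt g g' 0)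
    (hfg : (fun z => Complex.exp ((1 - z) * eval f z)) =ᶠ[𝓝 0] g) : f 1 - f 0 = g' / g 0 := by
  have hF : HasDerivAt (fun z => (1 - z) * eval f z) (f 1 - f 0) 0 :=
    (((hasDerivAt_id' 0).const_sub 1).mul (hasDerivAt_eval_zero f)).congr_deriv
      (by simp [eval_zero]; ring)
  have hg0 : g 0 = Complex.exp (f 0) := by simp [← hfg.eq_of_nhds, eval_zero]
  have hg' : Complex.exp (f 0) * (f 1 - f 0) = g' := by
    simpa [eval_zero] using (hF.cexp.congr_of_eventuallyEq hfg.symm).unique hg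
  rw [hg0, eq_div_iff (Complex.exp_ne_zero _), mul_comm, hg']

lemma hasDerivAt_geom_sum_zero {k : ℕ} (hk : 2 ≤ k) :
    HasDerivAt (fun z : ℂ => ∑ j ∈ Finset.range k, z ^ j) 1 0 := by
  refine (HasDerivAt.fun_sum fun j _ => hasDerivAt_pow j (0 : ℂ)).congr_deriv ?_
  rw [Finset.sum_eq_single 1]
  · simp
  · intro j _ hj
    rcases Nat.eq_zero_or_pos j with rfl | hj0
    · simp
    · simp [zero_pow (by omega : j - 1 ≠ 0)]
  · exact fun h1 => absurd (Finset.mem_range.mpr (by omega)) h1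

lemma coeff_one_sub_coeff_zero_eq_one {f : H2} {k : ℕ} (hk : 2 ≤ k)
    (hf : ∀ z : ℂ, ‖z‖ < 1 → Complex.exp ((1 - z) * eval f z) = (∑ j ∈ Finset.range k, z ^ j) / k) :
    f 1 - f 0 = 1 := by
  have hfg : (fun z => Complex.exp ((1 - z) * eval f z)) =ᶠ[𝓝 0]
      fun z => (∑ j ∈ Finset.range k, z ^ j) / k := by
    filter_upwards [Metric.ball_mem_nhds (0 : ℂ) one_pos] with z hz
    exact hf z (mem_ball_zero_iff.mp hz)
  rw [coeff_one_sub_coeff_zero_eq ((hasDerivAt_geom_sum_zero hk).div_const k) hfg]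
  have hk0 : (k : ℂ) ≠ 0 := by exact_mod_cast (by omega : k ≠ 0)
  simp [hk0, show k ≠ 0 by omega]

lemma inner_eq_coeff_zero_sub_coeff_one {p : H2}
    (hp : ∀ j : ℕ, p j = (if j = 0 then (1 : ℂ) else 0) - (if j = 1 then 1 else 0)) (x : H2) :
    ⟪p, x⟫ = x 0 - x 1 := by
  have hp' : p = lp.single 2 0 1 - lp.single 2 1 1 := by
    ext j
    simp [hp, lp.single_apply, Pi.single_apply]
  simp [hp', lp.inner_single_left]

/-- every function in the closure of `M = span{h_k - h_ℓ : k, ℓ ≥ 2}` is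
orthogonal to `1 - z`; in particular the closure of `M` is a proper subspace of `H²`. -/
theorem closure_M_orthogonal (h : ℕ → H2)
    (hh : ∀ k : ℕ, 1 ≤ k → eval (h k) 0 = -Real.log k ∧
      ∀ z : ℂ, ‖z‖ < 1 →
        Complex.exp ((1 - z) * eval (h k) z) = (∑ j ∈ Finset.range k, z ^ j) / k)
    (p : H2)
    (hp : ∀ j : ℕ, p j = (if j = 0 then (1 : ℂ) else 0) - (if j = 1 then 1 else 0)) :
    (∀ f ∈ closure ((Submodule.span ℂ
        {x : H2 | ∃ k l : ℕ, 2 ≤ k ∧ 2 ≤ l ∧ x = h k - h l} : Submodule ℂ H2) : Set H2),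
      ⟪f, p⟫ = 0) ∧
    closure ((Submodule.span ℂ
        {x : H2 | ∃ k l : ℕ, 2 ≤ k ∧ 2 ≤ l ∧ x = h k - h l} : Submodule ℂ H2) : Set H2)
      ≠ (Set.univ : Set H2) := by
  set M := Submodule.span ℂ {x : H2 | ∃ k l : ℕ, 2 ≤ k ∧ 2 ≤ l ∧ x = h k - h l}
  have hM : M ≤ (ℂ ∙ p)ᗮ := by
    rw [Submodule.span_le]
    rintro _ ⟨k, l, hk, hl, rfl⟩
    have hk' := coeff_one_sub_coeff_zero_eq_one hk (hh k (by omega)).2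
    have hl' := coeff_one_sub_coeff_zero_eq_one hl (hh l (by omega)).2
    rw [SetLike.mem_coe, Submodule.mem_orthogonal_singleton_iff_inner_right, inner_sub_right,
      inner_eq_coeff_zero_sub_coeff_one hp, inner_eq_coeff_zero_sub_coeff_one hp]
    linear_combination hl' - hk'
  have hclosure : closure (M : Set H2) ⊆ (ℂ ∙ p)ᗮ :=
    closure_minimal hM (Submodule.isClosed_orthogonal _)
  have horth : ∀ f ∈ closure (M : Set H2), ⟪f, p⟫ = 0 := fun f hf =>
    Submodule.mem_orthogonal_singleton_iff_inner_left.mp (hclosure hf)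
  refine ⟨horth, fun huniv => ?_⟩
  have hp0 : p = 0 := inner_self_eq_zero.mp (horth p (huniv ▸ Set.mem_univ p))
  simpa [hp0] using hp 0
end
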